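/- Finite-dimensional smooth-orbit log-convexity: let x, u, v be self-adjoint matrices with x positive semidefinite and nonzero, n ≥ 2 an integer, and suppose the Ward identity Tr(v x^{n-1}) + ∑_{j=0}^{n-2} ζ^{j+1} Tr(u x^j u x^{n-2-j}) = 0 holds with ζ = exp(-2πi/n). Set Q = Tr(x^n), Q' = n Tr(u x^{n-1}), Q'' = n Tr(v x^{n-1}) + n ∑_{j=0}^{n-2} Tr(u x^j u x^{n-2-j}). Then Q·Q'' ≥ (Q')². -/

import Mathlib

open Finset Matrix
open scoped ComplexOrder

/-- Real-coordinates view of a complex matrix entry. -/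
private def entR {d : ℕ} (A : Matrix (Fin d) (Fin d) ℂ) (q : (Fin d × Fin d) × Bool) : ℝ :=
  if q.2 then (A q.1.1 q.1.2).re else (A q.1.1 q.1.2).im

private lemma trace_mul_conjTranspose_re {d : ℕ} (A B : Matrix (Fin d) (Fin d) ℂ) :
    (A * Bᴴ).trace.re = ∑ q : (Fin d × Fin d) × Bool, entR A q * entR B q := by
  rw [Matrix.trace]
  simp only [Matrix.diag_apply, Matrix.mul_apply, Matrix.conjTranspose_apply]
  rw [Complex.re_sum]
  simp only [Complex.re_sum]
  rw [Fintype.sum_prod_type, Fintype.sum_prod_type]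
  refine Finset.sum_congr rfl fun i _ => ?_
  refine Finset.sum_congr rfl fun j _ => ?_
  simp [entR, Complex.mul_re, RingHom.id_apply]

private lemma cs_matrix {d : ℕ} (A B : Matrix (Fin d) (Fin d) ℂ) :
    ((A * Bᴴ).trace.re) ^ 2 ≤ (A * Aᴴ).trace.re * (B * Bᴴ).trace.re := by
  rw [trace_mul_conjTranspose_re, trace_mul_conjTranspose_re, trace_mul_conjTranspose_re]
  simpa [pow_two] using
    Finset.sum_mul_sq_le_sq_mul_sq Finset.univ (entR A) (entR B)

private lemma trace_mul_conjTranspose_re_nonneg {d : ℕ} (A : Matrix (Fin d) (Fin d) ℂ) :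
    0 ≤ (A * Aᴴ).trace.re := by
  rw [trace_mul_conjTranspose_re]
  exact Finset.sum_nonneg fun q _ => mul_self_nonneg _

/-- Finite-dimensional smooth-orbit log-convexity: `x, u, v` self-adjoint matrices with `x`
positive semidefinite and nonzero, satisfying the Ward identity
`Tr(v x^{n-1}) + ∑_j ζ^{j+1} Tr(u x^j u x^{n-2-j}) = 0` with `ζ = exp(-2πi/n)`. Then with
`Q = Tr(xⁿ)`, `Q' = n Tr(u x^{n-1})`, `Q'' = n Tr(v x^{n-1}) + n ∑_j Tr(u x^j u x^{n-2-j})`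
one has `Q Q'' ≥ (Q')²`. -/
theorem stmt18 {d : ℕ} (n : ℕ) (hn : 2 ≤ n)
    (x u v : Matrix (Fin d) (Fin d) ℂ)
    (hx : x.PosSemidef) (hxne : x ≠ 0) (hu : u.IsHermitian) (hv : v.IsHermitian)
    (hward : (v * x ^ (n - 1)).trace +
      ∑ j ∈ Finset.range (n - 1),
        Complex.exp (-2 * Real.pi * Complex.I / n) ^ (j + 1) *
          (u * x ^ j * u * x ^ (n - 2 - j)).trace = 0) :
    ((n : ℝ) * (u * x ^ (n - 1)).trace.re) ^ 2 ≤
      (x ^ n).trace.re *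
        ((n : ℝ) * ((v * x ^ (n - 1)).trace.re +
          ∑ j ∈ Finset.range (n - 1), (u * x ^ j * u * x ^ (n - 2 - j)).trace.re)) := by
  classical
  open scoped MatrixOrder in
  set s := CFC.sqrt x with hs_def
  open scoped MatrixOrder in
  have hsH : s.IsHermitian := (CFC.sqrt_nonneg x).posSemidef.1
  open scoped MatrixOrder in
  have hs2 : s ^ 2 = x := CFC.sq_sqrt x hx.nonneg
  have hxpow : ∀ k : ℕ, x ^ k = s ^ (2 * k) := fun k => by
    rw [pow_mul, hs2]
  have hspow : ∀ k : ℕ, (s ^ k)ᴴ = s ^ k := fun k => (hsH.pow k)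
  -- M j
  set M : ℕ → Matrix (Fin d) (Fin d) ℂ := fun j => s ^ (n - 2 - j) * u * s ^ j with hM_def
  have hMadj : ∀ j, (M j)ᴴ = s ^ j * u * s ^ (n - 2 - j) := by
    intro j
    simp [hM_def, Matrix.conjTranspose_mul, hspow, hu.eq, Matrix.mul_assoc]
  -- fact1
  have fact1 : ∀ j ∈ Finset.range (n - 1),
      (u * x ^ j * u * x ^ (n - 2 - j)).trace = (M j * (M j)ᴴ).trace := by
    intro j hj
    rw [hMadj j]
    have e2 : M j * (s ^ j * u * s ^ (n - 2 - j)) =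
        s ^ (n - 2 - j) * (u * s ^ (2 * j) * u * s ^ (n - 2 - j)) := by
      simp only [hM_def, two_mul, pow_add]
      noncomm_ring
    have e1 : u * x ^ j * u * x ^ (n - 2 - j) =
        (u * s ^ (2 * j) * u * s ^ (n - 2 - j)) * s ^ (n - 2 - j) := by
      rw [hxpow j, hxpow (n - 2 - j)]
      simp only [two_mul, pow_add]
      noncomm_ring
    rw [e1, e2, Matrix.trace_mul_comm]
  -- fact2
  have fact2 : ∀ j ∈ Finset.range (n - 1),
      (u * x ^ (n - 1)).trace = (M j * (s ^ n)ᴴ).trace := by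
    intro j hj
    simp only [Finset.mem_range] at hj
    rw [hspow n]
    have e2 : M j * s ^ n = s ^ (n - 2 - j) * (u * s ^ (j + n)) := by
      simp only [hM_def, pow_add]
      noncomm_ring
    have e1 : u * x ^ (n - 1) = (u * s ^ (j + n)) * s ^ (n - 2 - j) := by
      rw [hxpow (n - 1)]
      rw [mul_assoc, ← pow_add]
      congr 2
      omega
    rw [e1, e2, Matrix.trace_mul_comm]
  -- fact3
  have fact3 : (x ^ n).trace = (s ^ n * (s ^ n)ᴴ).trace := by
    rw [hspow n, ← pow_add, hxpow n, two_mul]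
  -- real abbreviations
  set Q : ℝ := (x ^ n).trace.re with hQ_def
  set C : ℝ := (u * x ^ (n - 1)).trace.re with hC_def
  set B : ℕ → ℝ := fun j => (u * x ^ j * u * x ^ (n - 2 - j)).trace.re with hB_def
  have hBnonneg : ∀ j ∈ Finset.range (n - 1), 0 ≤ B j := by
    intro j hj
    rw [hB_def]
    simp only
    rw [fact1 j hj]
    exact trace_mul_conjTranspose_re_nonneg (M j)
  have hBreal : ∀ j ∈ Finset.range (n - 1),
      (u * x ^ j * u * x ^ (n - 2 - j)).trace = (B j : ℂ) := by
    intro j hj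
    rw [fact1 j hj]
    have hherm : (M j * (M j)ᴴ).IsHermitian := Matrix.isHermitian_mul_conjTranspose_self (M j)
    have : (starRingEnd ℂ) ((M j * (M j)ᴴ).trace) = (M j * (M j)ᴴ).trace :=
      (Matrix.trace_conjTranspose _).symm.trans (by rw [hherm.eq])
    rw [hB_def]
    simp only
    rw [fact1 j hj]
    exact (Complex.conj_eq_iff_re.mp this).symm
  have hBj : ∀ j, (u * x ^ j * u * x ^ (n - 2 - j)).trace.re = B j := fun _ => rfl
  have hCq : (u * x ^ (n - 1)).trace.re = C := rfl
  have hQq : (x ^ n).trace.re = Q := rfl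
  -- Cauchy-Schwarz: C^2 ≤ Q * B j
  have hCS : ∀ j ∈ Finset.range (n - 1), C ^ 2 ≤ Q * B j := by
    intro j hj
    have h := cs_matrix (M j) (s ^ n)
    rw [← fact2 j hj, ← fact1 j hj, ← fact3, hCq, hBj j, hQq] at h
    linarith [h]
  -- the root of unity
  set ζ : ℂ := Complex.exp (-2 * Real.pi * Complex.I / n) with hζ_def
  have hnne : ((n : ℂ)) ≠ 0 := by
    exact_mod_cast (by omega : (n : ℕ) ≠ 0)
  have h2pi : (2 * (Real.pi : ℂ) * Complex.I) ≠ 0 :=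
    mul_ne_zero (mul_ne_zero two_ne_zero (by exact_mod_cast Real.pi_ne_zero)) Complex.I_ne_zero
  have hζn : ζ ^ n = 1 := by
    rw [hζ_def, ← Complex.exp_nat_mul]
    have : (n : ℂ) * (-2 * Real.pi * Complex.I / n) = (-1 : ℤ) * (2 * Real.pi * Complex.I) := by
      field_simp
      ring
    rw [this]
    exact Complex.exp_eq_one_iff.mpr ⟨-1, by push_cast; ring⟩
  have hζ1 : ζ ≠ 1 := by
    intro h
    obtain ⟨k, hk⟩ := Complex.exp_eq_one_iff.mp (hζ_def ▸ h)
    have hk2 : (-1 : ℂ) * (2 * Real.pi * Complex.I) = ((k * n : ℤ) : ℂ) * (2 * Real.pi * Complex.I) := by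
      have := congrArg (· * (n : ℂ)) hk
      rw [div_mul_cancel₀ _ hnne] at this
      push_cast
      linear_combination this
    have hkn : (k * (n : ℤ)) = -1 := by
      have := mul_right_cancel₀ h2pi hk2
      exact_mod_cast this.symm
    have hdvd : ((n : ℤ)) ∣ 1 := ⟨-k, by linear_combination hkn⟩
    have := Int.le_of_dvd one_pos hdvd
    omega
  have hgeom : ∑ k ∈ Finset.range n, ζ ^ k = 0 := by
    rw [geom_sum_eq hζ1, hζn]
    simp
  have hsumζ : ∑ j ∈ Finset.range (n - 1), ζ ^ (j + 1) = -1 := by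
    have h := Finset.sum_range_succ' (fun k => ζ ^ k) (n - 1)
    rw [show n - 1 + 1 = n from by omega] at h
    rw [hgeom] at h
    simp only [pow_zero] at h
    linear_combination -h
  -- weights
  set r : ℕ → ℝ := fun j => (ζ ^ (j + 1)).re with hr_def
  have hr_le : ∀ j, r j ≤ 1 := by
    intro j
    have habs : ‖ζ ^ (j + 1)‖ = 1 := by
      rw [norm_pow]
      have hz : (-2 * (Real.pi : ℂ) * Complex.I / n) = (((-2 * Real.pi / n : ℝ)) : ℂ) * Complex.I := by
        push_cast
        ring
      rw [hζ_def, hz, Complex.norm_exp_ofReal_mul_I, one_pow]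
    calc r j ≤ ‖ζ ^ (j + 1)‖ := Complex.re_le_norm _
      _ = 1 := habs
  have hsumr : ∑ j ∈ Finset.range (n - 1), r j = -1 := by
    have := congrArg Complex.re hsumζ
    rw [Complex.re_sum] at this
    simpa using this
  -- ward identity, real part
  have hward2 : (v * x ^ (n - 1)).trace + ∑ j ∈ Finset.range (n - 1), ζ ^ (j + 1) * (B j : ℂ) = 0 := by
    rw [← hward]
    congr 1
    exact Finset.sum_congr rfl fun j hj => by rw [hBreal j hj]
  have hw0 : (v * x ^ (n - 1)).trace.re + ∑ j ∈ Finset.range (n - 1), r j * B j = 0 := by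
    have h := congrArg Complex.re hward2
    simpa [Complex.re_sum, Complex.mul_re, hr_def] using h
  -- rewrite RHS inner sum
  set S : ℝ := ∑ j ∈ Finset.range (n - 1), (1 - r j) * B j with hS_def
  have hinner : (v * x ^ (n - 1)).trace.re + ∑ j ∈ Finset.range (n - 1), B j = S := by
    have hexp : S = ∑ j ∈ Finset.range (n - 1), B j - ∑ j ∈ Finset.range (n - 1), r j * B j := by
      rw [hS_def, ← Finset.sum_sub_distrib]
      exact Finset.sum_congr rfl fun j _ => by ring
    linarith [hw0, hexp]
  -- sum of weights is n
  have hsumw : ∑ j ∈ Finset.range (n - 1), (1 - r j) = (n : ℝ) := by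
    rw [Finset.sum_sub_distrib, Finset.sum_const, Finset.card_range, hsumr]
    have : ((n - 1 : ℕ) : ℝ) = (n : ℝ) - 1 := by
      rw [Nat.cast_sub (by omega : 1 ≤ n)]
      norm_num
    rw [nsmul_eq_mul, this]
    ring
  -- key inequality
  have key : (n : ℝ) * C ^ 2 ≤ Q * S := by
    calc (n : ℝ) * C ^ 2 = (∑ j ∈ Finset.range (n - 1), (1 - r j)) * C ^ 2 := by rw [hsumw]
      _ = ∑ j ∈ Finset.range (n - 1), (1 - r j) * C ^ 2 := Finset.sum_mul _ _ _
      _ ≤ ∑ j ∈ Finset.range (n - 1), (1 - r j) * (Q * B j) := by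
          refine Finset.sum_le_sum fun j hj => ?_
          exact mul_le_mul_of_nonneg_left (hCS j hj) (by linarith [hr_le j])
      _ = Q * S := by
          rw [hS_def, Finset.mul_sum]
          exact Finset.sum_congr rfl fun j _ => by ring
  -- finish
  rw [hinner]
  have h := mul_le_mul_of_nonneg_left key (by positivity : (0 : ℝ) ≤ (n : ℝ))
  calc ((n : ℝ) * C) ^ 2 = (n : ℝ) * ((n : ℝ) * C ^ 2) := by ring
    _ ≤ (n : ℝ) * (Q * S) := h
    _ = Q * ((n : ℝ) * S) := by ring
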